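/- arXiv:2303.10081 — 3 statements merged into one kernel-verified Lean document; each statement's English description precedes it below -/
import Mathlib

section
/- Let W be a real symmetric positive definite m × m matrix, and let u ∈ ℝ^m, ζ ∈ ℝ, c ∈ ℝ^m satisfy the KKT conditions for maximizing ⟨c, u⟩ over the ellipsoid uᵀ W u ≤ 1: namely ζ ≥ 0, c = 2 ζ W u (stationarity), ζ (uᵀ W u − 1) = 0 (complementarity), and uᵀ W u ≤ 1 (primal feasibility). Then ζ² ≤ ‖c‖² / (4 λ_min(W)), where λ_min(W) is the smallest eigenvalue of W and ‖·‖ is the Euclidean norm. -/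
/-!
If `ζ ≠ 0`, complementarity makes the constraint active: `uᵀ W u = 1`. Writing `u` in an
orthonormal eigenbasis of `W` with coordinates `xᵢ`, `‖W u‖² = ∑ λᵢ² xᵢ² ≥ λ_min ∑ λᵢ xᵢ² = λ_min`,
because `0 ≤ λ_min ≤ λᵢ`. Hence `‖c‖² = 4 ζ² ‖W u‖² ≥ 4 ζ² λ_min`.
-/

open Matrix

namespace OrthonormalBasis

open scoped InnerProductSpace

variable {ι 𝕜 E : Type*} [Fintype ι] [RCLike 𝕜] [NormedAddCommGroup E] [InnerProductSpace 𝕜 E]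
  (b : OrthonormalBasis ι 𝕜 E) {T : E →ₗ[𝕜] E} {μ : ι → ℝ}

theorem inner_map_eq_mul_inner (hT : ∀ i, T (b i) = (μ i : 𝕜) • b i) (i : ι) (x : E) :
    ⟪b i, T x⟫_𝕜 = μ i * ⟪b i, x⟫_𝕜 := by
  conv_lhs => rw [← b.sum_repr' x]
  simp only [map_sum, map_smul, hT, smul_smul]
  rw [b.orthonormal.inner_right_fintype, mul_comm]

theorem re_inner_map_eq_sum (hT : ∀ i, T (b i) = (μ i : 𝕜) • b i) (x : E) :
    RCLike.re ⟪x, T x⟫_𝕜 = ∑ i, μ i * ‖⟪b i, x⟫_𝕜‖ ^ 2 := by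
  rw [← b.sum_inner_mul_inner, map_sum]
  refine Finset.sum_congr rfl fun i _ => ?_
  rw [b.inner_map_eq_mul_inner hT, mul_left_comm, RCLike.re_ofReal_mul, inner_mul_symm_re_eq_norm,
    norm_mul, norm_inner_symm, sq]

theorem norm_map_sq_eq_sum (hT : ∀ i, T (b i) = (μ i : 𝕜) • b i) (x : E) :
    ‖T x‖ ^ 2 = ∑ i, μ i ^ 2 * ‖⟪b i, x⟫_𝕜‖ ^ 2 := by
  simp only [← b.sum_sq_norm_inner_right (T x), b.inner_map_eq_mul_inner hT, norm_mul,
    RCLike.norm_ofReal, mul_pow, sq_abs]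

theorem mul_re_inner_map_le_norm_map_sq (hT : ∀ i, T (b i) = (μ i : 𝕜) • b i) {r : ℝ}
    (hr₀ : 0 ≤ r) (hr : ∀ i, r ≤ μ i) (x : E) : r * RCLike.re ⟪x, T x⟫_𝕜 ≤ ‖T x‖ ^ 2 := by
  rw [b.re_inner_map_eq_sum hT, b.norm_map_sq_eq_sum hT, Finset.mul_sum]
  refine Finset.sum_le_sum fun i _ => ?_
  rw [← mul_assoc, sq (μ i)]
  gcongr
  · exact hr₀.trans (hr i)
  · exact hr i

end OrthonormalBasis

namespace Matrix

open scoped ComplexOrder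

variable {𝕜 n : Type*} [RCLike 𝕜] [Fintype n] [DecidableEq n] {A : Matrix n n 𝕜}

theorem PosSemidef.iInf_eigenvalues_mul_le (hA : A.PosSemidef) (u : n → 𝕜) :
    (⨅ i, hA.1.eigenvalues i) * RCLike.re (star u ⬝ᵥ (A *ᵥ u)) ≤
      RCLike.re (star (A *ᵥ u) ⬝ᵥ (A *ᵥ u)) := by
  have hT : ∀ i, toEuclideanLin A (hA.1.eigenvectorBasis i) =
      (hA.1.eigenvalues i : 𝕜) • hA.1.eigenvectorBasis i := fun i => by
    rw [toLpLin_apply, hA.1.mulVec_eigenvectorBasis, RCLike.real_smul_eq_coe_smul (K := 𝕜)]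
    rfl
  have := hA.1.eigenvectorBasis.mul_re_inner_map_le_norm_map_sq hT
    (Real.iInf_nonneg hA.eigenvalues_nonneg) (ciInf_le (Set.finite_range _).bddBelow)
    (WithLp.toLp 2 u)
  rw [← inner_self_eq_norm_sq (𝕜 := 𝕜)] at this
  simpa only [toLpLin_apply, EuclideanSpace.inner_toLp_toLp, dotProduct_comm] using this

theorem PosDef.iInf_eigenvalues_pos [Nonempty n] (hA : A.PosDef) : 0 < ⨅ i, hA.1.eigenvalues i := by
  obtain ⟨i, hi⟩ := exists_eq_ciInf_of_finite (f := hA.1.eigenvalues)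
  exact hi ▸ hA.eigenvalues_pos i

end Matrix

theorem stmt_2_general (m : ℕ) (W : Matrix (Fin m) (Fin m) ℝ) (hW : W.PosDef)
    (u c : Fin m → ℝ) (ζ : ℝ)
    (hstat : c = (2 * ζ) • (W *ᵥ u))
    (hcomp : ζ * (u ⬝ᵥ (W *ᵥ u) - 1) = 0) :
    ζ ^ 2 ≤ (∑ i, c i ^ 2) / (4 * ⨅ i, hW.1.eigenvalues i) := by
  obtain rfl | hζ := eq_or_ne ζ 0
  · have hmin₀ := Real.iInf_nonneg hW.posSemidef.eigenvalues_nonneg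
    rw [sq, zero_mul]
    exact div_nonneg (Finset.sum_nonneg fun i _ => sq_nonneg _) (by linarith)
  have hq : u ⬝ᵥ (W *ᵥ u) = 1 := sub_eq_zero.mp ((mul_eq_zero.mp hcomp).resolve_left hζ)
  have hne : Nonempty (Fin m) := by
    by_contra h
    simp [dotProduct, not_nonempty_iff.mp h] at hq
  have hmin : ⨅ i, hW.1.eigenvalues i ≤ (W *ᵥ u) ⬝ᵥ (W *ᵥ u) := by
    simpa only [star_trivial, RCLike.re_to_real, hq, mul_one] using
      hW.posSemidef.iInf_eigenvalues_mul_le u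
  have hc : ∑ i, c i ^ 2 = 4 * ζ ^ 2 * ((W *ᵥ u) ⬝ᵥ (W *ᵥ u)) := by
    simp only [hstat, dotProduct, Finset.mul_sum, Pi.smul_apply, smul_eq_mul]
    exact Finset.sum_congr rfl fun i _ => by ring
  rw [le_div_iff₀ (mul_pos four_pos hW.iInf_eigenvalues_pos), hc]
  nlinarith [sq_nonneg ζ]

/-- Ellipsoid case of Proposition 1: boundedness of the KKT dual variable for
maximizing `⟨c, u⟩` over the ellipsoid `uᵀ W u ≤ 1` with `W ≻ 0`. -/
theorem stmt_2 (m : ℕ) (W : Matrix (Fin m) (Fin m) ℝ) (hW : W.PosDef)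
    (u c : Fin m → ℝ) (ζ : ℝ)
    (hdual : 0 ≤ ζ)
    (hstat : c = (2 * ζ) • (W *ᵥ u))
    (hcomp : ζ * (u ⬝ᵥ (W *ᵥ u) - 1) = 0)
    (hprimal : u ⬝ᵥ (W *ᵥ u) ≤ 1) :
    ζ ^ 2 ≤ (∑ i, c i ^ 2) / (4 * ⨅ i, hW.1.eigenvalues i) :=
  stmt_2_general m W hW u c ζ hstat hcomp
end

section
/- Let θ₁, θ₂, θ₃ be real numbers with θ₁ > 0, θ₂ > 0 and θ₃² < θ₁ θ₂, and let A be the 2 × 2 symmetric matrix with diagonal entries θ₁, θ₂ and off-diagonal entries θ₃. If x = (x₁, x₂) ∈ ℝ² satisfies xᵀ A x = 1 and g = (0, x₁) ∈ ℝ², then (2 ⟨A x, g⟩)² ≤ 4 (θ₁ + θ₂)² / (θ₁ θ₂ − θ₃²). -/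
/-!
Completing the square, `θ₂ · xᵀAx = (θ₃x₁ + θ₂x₂)² + det A · x₁²`, splits `θ₂` into two summands
on the ellipse `xᵀAx = 1`. Since `⟨Ax, g⟩ = x₁(θ₃x₁ + θ₂x₂)`, the quantity `det A · (2⟨Ax, g⟩)²` is
four times the product of these summands, hence at most `θ₂²` by AM-GM, and `θ₂ ≤ θ₁ + θ₂`.
-/

open Matrix

lemma dotProduct_mulVec_fin_two (a b c : ℝ) (x : Fin 2 → ℝ) :
    x ⬝ᵥ (!![a, c; c, b] *ᵥ x) = a * x 0 ^ 2 + 2 * c * x 0 * x 1 + b * x 1 ^ 2 := by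
  simp only [mulVec, dotProduct, Fin.sum_univ_two, of_apply, cons_val', cons_val_zero,
    cons_val_one, empty_val', cons_val_fin_one]
  ring

lemma mulVec_dotProduct_vecCons_zero (a b c : ℝ) (x : Fin 2 → ℝ) :
    (!![a, c; c, b] *ᵥ x) ⬝ᵥ ![0, x 0] = x 0 * (c * x 0 + b * x 1) := by
  simp only [mulVec, dotProduct, Fin.sum_univ_two, of_apply, cons_val', cons_val_zero,
    cons_val_one, empty_val', cons_val_fin_one]
  ring

lemma det_mul_sq_le_of_quadratic_eq_one {a b c p q : ℝ}
    (h : a * p ^ 2 + 2 * c * p * q + b * q ^ 2 = 1) :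
    (a * b - c ^ 2) * (2 * (p * (c * p + b * q))) ^ 2 ≤ b ^ 2 := by
  have complete_square : (c * p + b * q) ^ 2 + (a * b - c ^ 2) * p ^ 2 = b := by
    linear_combination b * h
  calc (a * b - c ^ 2) * (2 * (p * (c * p + b * q))) ^ 2
      = 4 * (c * p + b * q) ^ 2 * ((a * b - c ^ 2) * p ^ 2) := by ring
    _ ≤ ((c * p + b * q) ^ 2 + (a * b - c ^ 2) * p ^ 2) ^ 2 := four_mul_le_sq_add _ _
    _ = b ^ 2 := by rw [complete_square]

/-- Bound on the objective gradient `L_g b(x,θ) = −2 xᵀ A g` of the elliptical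
robust CBF candidate with control vector field `g(x) = (0, x₁)ᵀ`. -/
theorem stmt_11 (θ₁ θ₂ θ₃ : ℝ) (h₁ : 0 < θ₁) (h₂ : 0 < θ₂) (h₃ : θ₃ ^ 2 < θ₁ * θ₂)
    (x : Fin 2 → ℝ) (hx : x ⬝ᵥ ((!![θ₁, θ₃; θ₃, θ₂]) *ᵥ x) = 1)
    (g : Fin 2 → ℝ) (hg : g = ![0, x 0]) :
    (2 * (((!![θ₁, θ₃; θ₃, θ₂]) *ᵥ x) ⬝ᵥ g)) ^ 2 ≤
      4 * (θ₁ + θ₂) ^ 2 / (θ₁ * θ₂ - θ₃ ^ 2) := by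
  subst hg
  rw [dotProduct_mulVec_fin_two] at hx
  rw [mulVec_dotProduct_vecCons_zero, le_div_iff₀ (sub_pos.mpr h₃), mul_comm]
  calc (θ₁ * θ₂ - θ₃ ^ 2) * (2 * (x 0 * (θ₃ * x 0 + θ₂ * x 1))) ^ 2
      ≤ θ₂ ^ 2 := det_mul_sq_le_of_quadratic_eq_one hx
    _ ≤ (θ₁ + θ₂) ^ 2 := pow_le_pow_left₀ h₂.le (le_add_of_nonneg_left h₁.le) 2
    _ ≤ 4 * (θ₁ + θ₂) ^ 2 := le_mul_of_one_le_left (sq_nonneg _) (by norm_num)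
end

section
/- Let u_max = 5 and θ ≥ 1. Then for every x = (x₁, x₂) ∈ ℝ² with x₁² + x₂² = θ, it holds that −x₂²(1 − x₂²) + 2 · 5 · |x₁ x₂| ≥ 0. -/
/-! With `t = x₂²` and `p = |x₁ x₂|`, the negative term `t (1 - t)` is at most `1/4` (AM-GM)
and, on `x₁² + x₂² ≥ 1`, at most `p²` (because `1 - t ≤ x₁²`). Hence it is at most `p / 2`,
which `2 u p` dominates as soon as `u ≥ 1/4`; `u_max = 5` is far more than needed. -/

lemma mul_one_sub_le_quarter (t : ℝ) : t * (1 - t) ≤ 1 / 4 := by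
  nlinarith [sq_nonneg (t - 1 / 2)]

lemma le_half_of_le_quarter_of_le_sq {q p : ℝ} (hp : 0 ≤ p) (hq : q ≤ 1 / 4) (hqp : q ≤ p ^ 2) :
    q ≤ p / 2 := by
  rcases le_or_gt p (1 / 2) with hsmall | hlarge
  · nlinarith
  · linarith

lemma sq_mul_one_sub_sq_le_sq_mul {x₁ x₂ : ℝ} (h : 1 ≤ x₁ ^ 2 + x₂ ^ 2) :
    x₂ ^ 2 * (1 - x₂ ^ 2) ≤ (x₁ * x₂) ^ 2 := by
  nlinarith [sq_nonneg x₂]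

theorem vanDerPol_circle_cbf_margin_nonneg {u x₁ x₂ : ℝ} (hu : 1 / 4 ≤ u)
    (h : 1 ≤ x₁ ^ 2 + x₂ ^ 2) : 0 ≤ -x₂ ^ 2 * (1 - x₂ ^ 2) + 2 * u * |x₁ * x₂| := by
  have hp : 0 ≤ |x₁ * x₂| := abs_nonneg _
  have hhalf : x₂ ^ 2 * (1 - x₂ ^ 2) ≤ |x₁ * x₂| / 2 :=
    le_half_of_le_quarter_of_le_sq hp (mul_one_sub_le_quarter _)
      (by rw [sq_abs]; exact sq_mul_one_sub_sq_le_sq_mul h)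
  nlinarith

/-- Validity of the circular CBF candidate for the clean Van der Pol oscillator
with `u_max = 5` and `θ ≥ 1`. -/
theorem stmt_14 (θ : ℝ) (hθ : 1 ≤ θ) (x₁ x₂ : ℝ) (hx : x₁ ^ 2 + x₂ ^ 2 = θ) :
    -x₂ ^ 2 * (1 - x₂ ^ 2) + 2 * 5 * |x₁ * x₂| ≥ 0 :=
  vanDerPol_circle_cbf_margin_nonneg (by norm_num) (hx ▸ hθ)
end
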